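/- arXiv:2102.08525 — 4 statements merged into one kernel-verified Lean document; each statement's English description precedes it below -/
import Mathlib

section
/- Let A and B be positive-dimensional projective linear subspaces of ℙⁿ such that A ∩ B consists of a single point p and A and B together span ℙⁿ. Let Γ ⊆ A ∪ B be a finite set satisfying CB(r) with p ∉ Γ, and set Γ_A = (Γ ∩ A) \ {p} and Γ_B = (Γ ∩ B) \ {p}. Then at least one of the two sets Γ_A and Γ_B ∪ {p} satisfies CB(r). -/
open MvPolynomial

/-- A point of `ℙⁿ` over `k`, realized as the projectivization of `k^(n+1)`. -/
abbrev ProjSpace (k : Type*) [Field k] (n : ℕ) : Type _ :=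
  Projectivization k (Fin (n + 1) → k)

/-- The projective linear subspace of `ℙⁿ` determined by a linear subspace
`W ⊆ k^(n+1)`, as a set of points. -/
def projSet {k : Type*} [Field k] {n : ℕ} (W : Submodule k (Fin (n + 1) → k)) :
    Set (ProjSpace k n) :=
  {x | x.rep ∈ W}

/-- The Cayley–Bacharach condition `CB(r)`: every homogeneous polynomial of degree `r`
vanishing at all points of `Γ` except possibly one vanishes on all of `Γ`. -/
def IsCB {k : Type*} [Field k] {n : ℕ} (r : ℕ) (Γ : Set (ProjSpace k n)) : Prop :=
  ∀ F : MvPolynomial (Fin (n + 1)) k, F.IsHomogeneous r →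
    ∀ x ∈ Γ, (∀ y ∈ Γ, y ≠ x → MvPolynomial.eval y.rep F = 0) →
      MvPolynomial.eval x.rep F = 0

/-- A plane configuration in `ℙⁿ`: a finite collection of distinct
positive-dimensional projective linear subspaces. -/
structure PlaneConfig (k : Type*) [Field k] (n : ℕ) where
  length : ℕ
  P : Fin length → Submodule k (Fin (n + 1) → k)
  inj : Function.Injective P
  posdim : ∀ i, 2 ≤ Module.finrank k (P i)

namespace PlaneConfig

variable {k : Type*} [Field k] {n : ℕ}

/-- The dimension of a plane configuration: the sum of the (projective) dimensions
of its planes. -/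
noncomputable def dim (C : PlaneConfig k n) : ℕ := ∑ i, (Module.finrank k (C.P i) - 1)

/-- The set of points of `ℙⁿ` lying on the configuration. -/
def points (C : PlaneConfig k n) : Set (ProjSpace k n) := ⋃ i, projSet (C.P i)

/-- A configuration is skew if its planes are pairwise (projectively) disjoint. -/
def Skew (C : PlaneConfig k n) : Prop := ∀ i j, i ≠ j → C.P i ⊓ C.P j = ⊥

end PlaneConfig

/-!
If `Γ_B ∪ {p}` fails `CB(r)`, witnessed by a form `G`, then `G` can only fail at `p`: failing at
a point `y` of `Γ_B` would force `G(p) = 0`, and gluing the zero form on `A` to `G` on `B` would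
give a form of degree `r` violating `CB(r)` for `Γ` at `y`. So `G` vanishes on `Γ_B` but not at
`p`. Given a form `F` vanishing on `Γ_A \ {x}`, glue `F` on `A` to `(F(p) / G(p)) • G` on `B`: the
result vanishes on `Γ \ {x}`, hence at `x`, so `F(x) = 0`.

Two forms of degree `r` on `A` and `B` glue as soon as they agree at `p`: they then agree on the
line `A ∩ B`, and since `A + B` is the whole space, there are projections `π_A`, `π_B` onto `A`,
`B` each mapping the other subspace into `A ∩ B`, so `F_A ∘ π_A + F_B ∘ π_B - F_A ∘ π_A ∘ π_B`
restricts to `F_A` on `A` and to `F_B` on `B`.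
-/

theorem Submodule.exists_projection_map_le_inf {K V : Type*} [DivisionRing K] [AddCommGroup V]
    [Module K V] {A B : Submodule K V} (hAB : A ⊔ B = ⊤) :
    ∃ π : V →ₗ[K] V, (∀ v ∈ A, π v = v) ∧ ∀ v ∈ B, π v ∈ A ⊓ B := by
  obtain ⟨C, hCB, hCA⟩ := Codisjoint.exists_isCompl (codisjoint_iff.mpr (sup_comm A B ▸ hAB))
  refine ⟨A.projection C hCA.symm, fun v hv => projection_apply_of_mem_left _ hv,
    fun v hv => ⟨projection_apply_mem _ v, ?_⟩⟩
  simpa using sub_mem hv (hCB (sub_projection_mem hCA.symm v))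

namespace MvPolynomial

variable {R σ τ : Type*} [CommRing R]

theorem IsHomogeneous.eval_smul {F : MvPolynomial σ R} {r : ℕ} (hF : F.IsHomogeneous r)
    (t : R) (v : σ → R) : eval (t • v) F = t ^ r * eval v F := by
  rw [eval_eq, eval_eq, Finset.mul_sum]
  refine Finset.sum_congr rfl fun d hd => ?_
  simp only [Pi.smul_apply, smul_eq_mul, mul_pow, Finset.prod_mul_distrib,
    Finset.prod_pow_eq_pow_sum, ← hF.degree_eq_sum_deg_support hd]
  ring

variable [Fintype σ] [DecidableEq σ]

noncomputable def compLinearMap (L : (σ → R) →ₗ[R] (τ → R)) (F : MvPolynomial τ R) :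
    MvPolynomial σ R :=
  bind₁ (fun i => ∑ j, C (L (Pi.single j 1) i) * X j) F

theorem eval_compLinearMap (L : (σ → R) →ₗ[R] (τ → R)) (F : MvPolynomial τ R) (v : σ → R) :
    eval v (compLinearMap L F) = eval (L v) F := by
  simp only [compLinearMap, eval, eval₂Hom_bind₁]
  congr 2 with i
  rw [← LinearMap.toMatrix'_mulVec]
  simp [Matrix.mulVec, dotProduct, mul_comm]

theorem IsHomogeneous.compLinearMap {F : MvPolynomial τ R} {r : ℕ} (hF : F.IsHomogeneous r)
    (L : (σ → R) →ₗ[R] (τ → R)) : (compLinearMap L F).IsHomogeneous r := by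
  have := hF.aeval (fun i => ∑ j, C (L (Pi.single j 1) i) * X j) fun i =>
    IsHomogeneous.sum _ _ _ fun j _ => isHomogeneous_C_mul_X _ j
  rwa [one_mul] at this

theorem exists_isHomogeneous_eval_eq_of_sup_eq_top {K : Type*} [Field K]
    {A B : Submodule K (σ → K)} (hAB : A ⊔ B = ⊤) {r : ℕ}
    {FA FB : MvPolynomial σ K} (hFA : FA.IsHomogeneous r) (hFB : FB.IsHomogeneous r)
    (hagree : ∀ v ∈ A ⊓ B, eval v FA = eval v FB) :
    ∃ H : MvPolynomial σ K, H.IsHomogeneous r ∧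
      (∀ v ∈ A, eval v H = eval v FA) ∧ ∀ v ∈ B, eval v H = eval v FB := by
  obtain ⟨πA, hπA, -⟩ := Submodule.exists_projection_map_le_inf hAB
  obtain ⟨πB, hπB, hπBA⟩ := Submodule.exists_projection_map_le_inf (sup_comm A B ▸ hAB)
  refine ⟨compLinearMap πA FA + compLinearMap πB FB - compLinearMap (πA ∘ₗ πB) FA,
    ((hFA.compLinearMap _).add (hFB.compLinearMap _)).sub (hFA.compLinearMap _),
    fun v hv => ?_, fun v hv => ?_⟩
  · -- `πB` maps `A` into `A ⊓ B`, where `FA` and `FB` agree, so the last two terms cancel.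
    have hw := hπBA v hv
    simp only [map_sub, map_add, eval_compLinearMap, LinearMap.comp_apply, hπA v hv,
      hπA _ hw.2, hagree _ ⟨hw.2, hw.1⟩]
    ring
  · simp only [map_sub, map_add, eval_compLinearMap, LinearMap.comp_apply, hπB v hv]
    ring

end MvPolynomial

section TwoPlanes

variable {k : Type*} [Field k] {n r : ℕ} {A B : Submodule k (Fin (n + 1) → k)}
  {p : ProjSpace k n} {Γ : Set (ProjSpace k n)}

theorem inf_eq_span_rep_of_projSet_inter_eq (hp : projSet A ∩ projSet B = {p}) :
    A ⊓ B = k ∙ p.rep := by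
  refine le_antisymm ?_ ?_
  · rintro v ⟨hvA, hvB⟩
    by_cases hv : v = 0
    · simp [hv]
    obtain ⟨a, ha⟩ := Projectivization.exists_smul_eq_mk_rep k v hv
    have hvp : Projectivization.mk k v hv = p := by
      have : Projectivization.mk k v hv ∈ projSet A ∩ projSet B :=
        ⟨show _ ∈ A from ha ▸ A.smul_mem _ hvA, show _ ∈ B from ha ▸ B.smul_mem _ hvB⟩
      rwa [hp] at this
    rw [hvp] at ha
    exact (Submodule.smul_mem_iff' _ a).mp (ha ▸ Submodule.mem_span_singleton_self _)
  · rw [Submodule.span_le, Set.singleton_subset_iff]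
    exact (hp.ge rfl : p ∈ projSet A ∩ projSet B)

theorem exists_isHomogeneous_eval_eq_on_projSet (hp : projSet A ∩ projSet B = {p})
    (hspan : A ⊔ B = ⊤) {FA FB : MvPolynomial (Fin (n + 1)) k} (hFA : FA.IsHomogeneous r)
    (hFB : FB.IsHomogeneous r) (hagree : eval p.rep FA = eval p.rep FB) :
    ∃ H : MvPolynomial (Fin (n + 1)) k, H.IsHomogeneous r ∧
      (∀ x ∈ projSet A, eval x.rep H = eval x.rep FA) ∧
      ∀ x ∈ projSet B, eval x.rep H = eval x.rep FB := by
  refine (exists_isHomogeneous_eval_eq_of_sup_eq_top hspan hFA hFB fun v hv => ?_).imp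
    fun H ⟨hH, hHA, hHB⟩ => ⟨hH, fun x hx => hHA _ hx, fun x hx => hHB _ hx⟩
  rw [inf_eq_span_rep_of_projSet_inter_eq hp] at hv
  obtain ⟨t, rfl⟩ := Submodule.mem_span_singleton.mp hv
  rw [hFA.eval_smul, hFB.eval_smul, hagree]

theorem IsCB.eval_eq_zero_of_eval_rep_eq (hCB : IsCB r Γ) (hsub : Γ ⊆ projSet A ∪ projSet B)
    (hp : projSet A ∩ projSet B = {p}) (hspan : A ⊔ B = ⊤)
    {FA FB : MvPolynomial (Fin (n + 1)) k} (hFA : FA.IsHomogeneous r)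
    (hFB : FB.IsHomogeneous r) (hagree : eval p.rep FA = eval p.rep FB) {x : ProjSpace k n}
    (hx : x ∈ Γ) (hvanA : ∀ z ∈ Γ ∩ projSet A, z ≠ x → eval z.rep FA = 0)
    (hvanB : ∀ z ∈ Γ ∩ projSet B, z ≠ x → eval z.rep FB = 0) :
    (x ∈ projSet A → eval x.rep FA = 0) ∧ (x ∈ projSet B → eval x.rep FB = 0) := by
  obtain ⟨H, hH, hHA, hHB⟩ := exists_isHomogeneous_eval_eq_on_projSet hp hspan hFA hFB hagree
  have hHx : eval x.rep H = 0 := hCB H hH x hx fun z hz hzx => (hsub hz).elim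
    (fun hzA => (hHA z hzA).trans (hvanA z ⟨hz, hzA⟩ hzx))
    (fun hzB => (hHB z hzB).trans (hvanB z ⟨hz, hzB⟩ hzx))
  exact ⟨fun hxA => (hHA x hxA).symm.trans hHx, fun hxB => (hHB x hxB).symm.trans hHx⟩

theorem exists_isHomogeneous_eval_rep_ne_zero_of_not_isCB_insert (hCB : IsCB r Γ)
    (hsub : Γ ⊆ projSet A ∪ projSet B) (hp : projSet A ∩ projSet B = {p})
    (hspan : A ⊔ B = ⊤) (hpnot : p ∉ Γ) (hB : ¬IsCB r (insert p (Γ ∩ projSet B))) :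
    ∃ G : MvPolynomial (Fin (n + 1)) k, G.IsHomogeneous r ∧
      (∀ z ∈ Γ ∩ projSet B, eval z.rep G = 0) ∧ eval p.rep G ≠ 0 := by
  simp only [IsCB, not_forall] at hB
  obtain ⟨G, hG, y, hy, hGvan, hGy⟩ := hB
  obtain rfl | hyB := hy
  · exact ⟨G, hG, fun z hz => hGvan z (Or.inr hz) (ne_of_mem_of_not_mem hz.1 hpnot), hGy⟩
  · have hGp : eval p.rep G = 0 :=
      hGvan p (Set.mem_insert _ _) (ne_of_mem_of_not_mem hyB.1 hpnot).symm
    exact absurd ((hCB.eval_eq_zero_of_eval_rep_eq hsub hp hspan (isHomogeneous_zero _ _ r) hG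
      (by rw [map_zero, hGp]) hyB.1 (fun _ _ _ => map_zero _)
      fun z hz hzy => hGvan z (Or.inr hz) hzy).2 hyB.2) hGy

theorem isCB_inter_of_eval_rep_ne_zero (hCB : IsCB r Γ) (hsub : Γ ⊆ projSet A ∪ projSet B)
    (hp : projSet A ∩ projSet B = {p}) (hspan : A ⊔ B = ⊤) {G : MvPolynomial (Fin (n + 1)) k}
    (hG : G.IsHomogeneous r) (hGB : ∀ z ∈ Γ ∩ projSet B, eval z.rep G = 0)
    (hGp : eval p.rep G ≠ 0) : IsCB r (Γ ∩ projSet A) := by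
  intro F hF x hx hFvan
  refine (hCB.eval_eq_zero_of_eval_rep_eq hsub hp hspan hF
    (hG.C_mul (eval p.rep F / eval p.rep G)) ?_ hx.1 hFvan fun z hz _ => ?_).1 hx.2
  · rw [map_mul, eval_C, div_mul_cancel₀ _ hGp]
  · rw [map_mul, hGB z hz, mul_zero]

end TwoPlanes

theorem union_two_at_point_2_general {k : Type*} [Field k] {n : ℕ} (r : ℕ)
    (A B : Submodule k (Fin (n + 1) → k))
    (p : ProjSpace k n) (hp : projSet A ∩ projSet B = {p})
    (hspan : A ⊔ B = ⊤)
    (Γ : Set (ProjSpace k n))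
    (hsub : Γ ⊆ projSet A ∪ projSet B) (hCB : IsCB r Γ)
    (hpnot : p ∉ Γ) :
    IsCB r ((Γ ∩ projSet A) \ {p}) ∨ IsCB r (((Γ ∩ projSet B) \ {p}) ∪ {p}) := by
  have hpA : p ∉ Γ ∩ projSet A := fun h => hpnot h.1
  have hpB : p ∉ Γ ∩ projSet B := fun h => hpnot h.1
  rw [Set.sdiff_singleton_eq_self hpA, Set.sdiff_singleton_eq_self hpB, Set.union_singleton]
  refine or_iff_not_imp_right.mpr fun hB => ?_
  obtain ⟨G, hG, hGB, hGp⟩ :=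
    exists_isHomogeneous_eval_rep_ne_zero_of_not_isCB_insert hCB hsub hp hspan hpnot hB
  exact isCB_inter_of_eval_rep_ne_zero hCB hsub hp hspan hG hGB hGp

/-- Two planes meeting at a point, part 2: if `p ∉ Γ`, at least one of `Γ_A` and
`Γ_B ∪ {p}` satisfies `CB(r)`. -/
theorem union_two_at_point_2 {k : Type*} [Field k] [Infinite k] {n : ℕ} (r : ℕ)
    (A B : Submodule k (Fin (n + 1) → k))
    (hA : 2 ≤ Module.finrank k A) (hB : 2 ≤ Module.finrank k B)
    (p : ProjSpace k n) (hp : projSet A ∩ projSet B = {p})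
    (hspan : A ⊔ B = ⊤)
    (Γ : Set (ProjSpace k n)) (hfin : Γ.Finite)
    (hsub : Γ ⊆ projSet A ∪ projSet B) (hCB : IsCB r Γ)
    (hpnot : p ∉ Γ) :
    IsCB r ((Γ ∩ projSet A) \ {p}) ∨ IsCB r (((Γ ∩ projSet B) \ {p}) ∪ {p}) :=
  union_two_at_point_2_general r A B p hp hspan Γ hsub hCB hpnot
end

section
/- Length bound for maximal-length configurations: Let d ≥ 2 and let Γ ⊆ ℙⁿ be a finite set satisfying CB(r) with |Γ| ≤ (d+1)r + 1. Suppose Γ lies on a skew plane configuration 𝒫 = P₁ ∪ … ∪ P_k of dimension d, with Γ ∩ Pᵢ nonempty for all i. If d − 1 ≤ r ≤ 2(d − 1), then the length of 𝒫 is at most d − 1 (in particular, 𝒫 is not a union of d pairwise disjoint lines). -/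
open MvPolynomial

/-!
If the configuration had `d` planes, they would all be lines. Each line `Pᵢ` must then carry at
least `r + 2` points of `Γ`: otherwise, for `x ∈ Γ ∩ Pᵢ`, the `d - 1 ≤ r` other lines and the at
most `r` other points of `Γ ∩ Pᵢ` can be paired off into at most `r` subspaces `Q ⊔ ⟨y⟩`, none
containing `x` since `Q` is skew to `Pᵢ`; a product of `r` linear forms, one vanishing on each of
them but not at `x`, contradicts `CB(r)`. Skewness makes these point sets disjoint, so
`d (r + 2) ≤ |Γ| ≤ (d + 1) r + 1`, i.e. `2d ≤ r + 1`, against `r ≤ 2(d - 1)`.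
-/

open Finset

section LinearAlgebra

variable {k V : Type*} [Field k]

theorem Projectivization.eq_of_rep_mem_span [AddCommGroup V] [Module k V]
    {x y : Projectivization k V} (h : x.rep ∈ Submodule.span k {y.rep}) : x = y := by
  rw [← x.mk_rep, ← y.mk_rep, Projectivization.mk_eq_mk_iff']
  exact Submodule.mem_span_singleton.mp h

theorem Submodule.notMem_sup_of_inf_eq_bot [AddCommGroup V] [Module k V]
    {P Q W : Submodule k V} (hQP : Q ⊓ P = ⊥) (hWP : W ≤ P) {v : V} (hvP : v ∈ P)
    (hvW : v ∉ W) : v ∉ Q ⊔ W := by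
  intro hv
  have : v ∈ (W ⊔ Q) ⊓ P := ⟨sup_comm Q W ▸ hv, hvP⟩
  rw [sup_inf_assoc_of_le Q hWP, hQP, sup_bot_eq] at this
  exact hvW this

theorem MvPolynomial.exists_isHomogeneous_one_eval_eq_zero {n : ℕ}
    {W : Submodule k (Fin n → k)} {p : Fin n → k} (hp : p ∉ W) :
    ∃ F : MvPolynomial (Fin n) k, F.IsHomogeneous 1 ∧
      (∀ w ∈ W, eval w F = 0) ∧ eval p F ≠ 0 := by
  obtain ⟨φ, hφp, hφW⟩ := Submodule.exists_dual_map_eq_bot_of_notMem hp inferInstance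
  let M := LinearMap.toMatrix' (LinearMap.pi fun _ : Unit => φ)
  have heval (v : Fin n → k) : eval v (M.toMvPolynomial ()) = φ v := by
    simp [M, Matrix.toMvPolynomial_eval_eq_apply]
  refine ⟨M.toMvPolynomial (), Matrix.toMvPolynomial_isHomogeneous _ _, fun w hw => ?_, ?_⟩
  · rw [heval, ← Submodule.mem_bot k, ← hφW]
    exact Submodule.mem_map_of_mem hw
  · rwa [heval]

end LinearAlgebra

namespace List

variable {α : Type*}

theorem getD_of_forall_mem {p : α → Prop} {l : List α} {d : α} (hl : ∀ a ∈ l, p a) (hd : p d)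
    (t : ℕ) : p (l.getD t d) := by
  rcases lt_or_ge t l.length with ht | ht
  · exact getD_eq_getElem l d ht ▸ hl _ (getElem_mem ht)
  · rwa [getD_eq_default l d ht]

theorem exists_fin_getD_eq {l : List α} {a : α} (ha : a ∈ l) {m : ℕ} (hl : l.length ≤ m)
    (d : α) : ∃ t : Fin m, l.getD t d = a := by
  obtain ⟨t, ht, rfl⟩ := mem_iff_getElem.mp ha
  exact ⟨⟨t, ht.trans_le hl⟩, getD_eq_getElem l d ht⟩

end List

theorem IsCB.exists_notMem_of_forall_notMem {k : Type*} [Field k] {n r : ℕ}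
    {Γ : Set (ProjSpace k n)} (hCB : IsCB r Γ) {x : ProjSpace k n} (hx : x ∈ Γ)
    (W : Fin r → Submodule k (Fin (n + 1) → k)) (hxW : ∀ t, x.rep ∉ W t) : ∃ y ∈ Γ, y ≠ x ∧ ∀ t, y.rep ∉ W t := by
  by_contra! hcover
  choose F hFhom hFW hFx using fun t => exists_isHomogeneous_one_eval_eq_zero (hxW t)
  have hGhom : (∏ t, F t).IsHomogeneous r := by
    simpa using IsHomogeneous.prod univ F (fun _ => 1) fun t _ => hFhom t
  refine (prod_ne_zero_iff.mpr fun t _ => hFx t : ∏ t, eval x.rep (F t) ≠ 0) ?_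
  rw [← map_prod]
  refine hCB _ hGhom x hx fun y hy hyx => ?_
  obtain ⟨t, ht⟩ := hcover y hy hyx
  rw [map_prod]
  exact prod_eq_zero (mem_univ t) (hFW t _ ht)

namespace PlaneConfig

variable {k : Type*} [Field k] {n : ℕ} {C : PlaneConfig k n}

theorem length_le_dim (C : PlaneConfig k n) : C.length ≤ C.dim :=
  calc C.length = ∑ _i : Fin C.length, 1 := by simp
    _ ≤ C.dim := sum_le_sum fun i _ => by have := C.posdim i; omega

theorem Skew.rep_notMem (hC : C.Skew) {i j : Fin C.length} (hij : i ≠ j) {x : ProjSpace k n}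
    (hxi : x.rep ∈ C.P i) : x.rep ∉ C.P j := fun hxj =>
  x.rep_nonzero <| (Submodule.mem_bot k).mp (hC i j hij ▸ ⟨hxi, hxj⟩)

open scoped Classical in
theorem Skew.sum_card_filter_rep_mem_le (hC : C.Skew) (Γ : Finset (ProjSpace k n)) :
    ∑ i, #{x ∈ Γ | x.rep ∈ C.P i} ≤ #Γ := by
  rw [← card_biUnion (t := fun i => {x ∈ Γ | x.rep ∈ C.P i}) fun i _ j _ hij =>
    disjoint_filter.mpr fun _ _ hxi => hC.rep_notMem hij hxi]
  exact card_le_card (biUnion_subset.mpr fun i _ => filter_subset _ _)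

end PlaneConfig

open scoped Classical in
theorem IsCB.add_two_le_card_plane {k : Type*} [Field k] {n r : ℕ} {Γ : Finset (ProjSpace k n)}
    (hCB : IsCB r (Γ : Set (ProjSpace k n))) {C : PlaneConfig k n} (hC : C.Skew)
    (hsub : ↑Γ ⊆ C.points) (hr : C.length - 1 ≤ r) {i : Fin C.length} {x : ProjSpace k n}
    (hx : x ∈ Γ) (hxi : x.rep ∈ C.P i) : r + 2 ≤ #{y ∈ Γ | y.rep ∈ C.P i} := by
  by_contra! hcard
  set S := {y ∈ Γ | y.rep ∈ C.P i}.erase x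
  have hS : #S ≤ r := by
    rw [card_erase_of_mem (mem_filter.mpr ⟨hx, hxi⟩)]
    omega
  let planes := (univ.erase i).toList.map C.P
  let lines := S.toList.map fun y => Submodule.span k {y.rep}
  have hplanes : planes.length ≤ r := by simpa [planes] using hr
  have hlines : lines.length ≤ r := by simpa [lines] using hS
  have hplanes_skew : ∀ Q ∈ planes, Q ⊓ C.P i = ⊥ := by
    simp only [planes, List.forall_mem_map, mem_toList, mem_erase]
    exact fun j ⟨hji, _⟩ => hC j i hji
  have hlines_avoid : ∀ V ∈ lines, V ≤ C.P i ∧ x.rep ∉ V := by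
    simp only [lines, S, List.forall_mem_map, mem_toList, mem_erase, mem_filter]
    rintro y ⟨hyx, -, hyi⟩
    exact ⟨Submodule.span_singleton_le_iff_mem _ _ |>.mpr hyi,
      fun h => hyx (Projectivization.eq_of_rep_mem_span h).symm⟩
  -- the `t`-th other plane joined with the `t`-th other point; missing entries are `⊥`
  obtain ⟨y, hy, hyx, hyW⟩ := hCB.exists_notMem_of_forall_notMem hx
    (fun t => planes.getD t ⊥ ⊔ lines.getD t ⊥) fun t => by
      obtain ⟨hle, hxt⟩ := List.getD_of_forall_mem hlines_avoid
        ⟨bot_le, by simpa using x.rep_nonzero⟩ t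
      exact Submodule.notMem_sup_of_inf_eq_bot
        (List.getD_of_forall_mem hplanes_skew (bot_inf_eq _) t) hle hxi hxt
  obtain ⟨_, ⟨j, rfl⟩, hyj⟩ := hsub hy
  by_cases hji : j = i
  · subst hji
    have : Submodule.span k {y.rep} ∈ lines :=
      List.mem_map_of_mem (mem_toList.mpr (mem_erase.mpr ⟨hyx, mem_filter.mpr ⟨hy, hyj⟩⟩))
    obtain ⟨t, ht⟩ := List.exists_fin_getD_eq this hlines ⊥
    exact hyW t (Submodule.mem_sup_right (ht ▸ Submodule.mem_span_singleton_self _))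
  · have : C.P j ∈ planes :=
      List.mem_map_of_mem (mem_toList.mpr (mem_erase.mpr ⟨hji, mem_univ j⟩))
    obtain ⟨t, ht⟩ := List.exists_fin_getD_eq this hplanes ⊥
    exact hyW t (Submodule.mem_sup_left (ht ▸ hyj))

theorem d_lines_bound_general {k : Type*} [Field k] {n : ℕ} (r d : ℕ)
    (Γ : Set (ProjSpace k n)) (hfin : Γ.Finite) (hCB : IsCB r Γ)
    (hcard : Γ.ncard ≤ (d + 1) * r + 1)
    (C : PlaneConfig k n) (hskew : C.Skew) (hdim : C.dim = d)
    (hsub : Γ ⊆ C.points) (hne : ∀ i, (Γ ∩ projSet (C.P i)).Nonempty)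
    (hr1 : d - 1 ≤ r) (hr2 : r ≤ 2 * (d - 1)) :
    C.length ≤ d - 1 := by
  classical
  by_contra! hlen
  have hlen_eq : C.length = d := le_antisymm (hdim ▸ C.length_le_dim) (by omega)
  obtain ⟨Γ, rfl⟩ := hfin.exists_finset_coe
  have hplane (i : Fin C.length) : r + 2 ≤ #{y ∈ Γ | y.rep ∈ C.P i} := by
    obtain ⟨x, hx, hxi⟩ := hne i
    exact hCB.add_two_le_card_plane hskew hsub (by omega) hx hxi
  have hcount : d * (r + 2) ≤ (d + 1) * r + 1 :=
    calc d * (r + 2) = ∑ _i : Fin C.length, (r + 2) := by simp [hlen_eq]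
      _ ≤ ∑ i, #{y ∈ Γ | y.rep ∈ C.P i} := sum_le_sum fun i _ => hplane i
      _ ≤ #Γ := hskew.sum_card_filter_rep_mem_le Γ
      _ ≤ (d + 1) * r + 1 := by rwa [Set.ncard_coe_finset] at hcard
  have hr : r + 2 ≤ 2 * d := by omega
  nlinarith

/-- Length bound for maximal-length configurations: if `Γ` is `CB(r)` with at most
`(d+1)r + 1` points, lying on a skew plane configuration of dimension `d` and meeting
every plane, and `d - 1 ≤ r ≤ 2(d - 1)`, then the configuration has length at most
`d - 1`. -/
theorem d_lines_bound {k : Type*} [Field k] [Infinite k] {n : ℕ} (r d : ℕ) (hd : 2 ≤ d)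
    (Γ : Set (ProjSpace k n)) (hfin : Γ.Finite) (hCB : IsCB r Γ)
    (hcard : Γ.ncard ≤ (d + 1) * r + 1)
    (C : PlaneConfig k n) (hskew : C.Skew) (hdim : C.dim = d)
    (hsub : Γ ⊆ C.points) (hne : ∀ i, (Γ ∩ projSet (C.P i)).Nonempty)
    (hr1 : d - 1 ≤ r) (hr2 : r ≤ 2 * (d - 1)) :
    C.length ≤ d - 1 :=
  d_lines_bound_general r d Γ hfin hCB hcard C hskew hdim hsub hne hr1 hr2
end

section
/- Case d = 2: Let r ≥ 1 and let Γ ⊆ ℙⁿ be a finite set satisfying CB(r) with |Γ| ≤ 3r + 1. Then either Γ lies on a projective linear subspace of dimension at most 2, or Γ is contained in the union of two disjoint lines. -/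
open MvPolynomial

/-!
Two facts about a `CB(r)` set `Γ` drive the proof. First, `Γ \ {x}` cannot be covered by `r`
linear subspaces missing `x`: the product of linear forms cutting them out would vanish on
`Γ \ {x}` but not at `x`. Second, as `k` is infinite, removing from a `CB(r + 1)` set its points on
a subspace `W` leaves a `CB(r)` set: multiply by a linear form vanishing on `W` and at no other
point of `Γ`. Hence a nonempty `CB(r)` set has at least `r + 2` points, and one with at most
`2r + 1` points is collinear.

The theorem follows by induction on `r`. Suppose `Γ` is neither planar nor on two lines, and let
`ℓ` be a line through the most points of `Γ`. Then `Γ \ ℓ` is `CB(r - 1)` and not collinear, so it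
has at least `2r` points. It is not planar either: otherwise `ℓ` carries `r + 1` points and
`Γ \ ℓ` only `2r`, and pairing off the points of `Γ \ ℓ` along lines that miss a point `x` yields a
forbidden cover. If no three points of `Γ` are collinear, the same reasoning for a plane `P`
through the most points of `Γ`, with the induction hypothesis applied to `Γ \ P`, gives too many
points. Otherwise `ℓ` carries at least three points, so by induction `Γ \ ℓ` lies on two lines,
necessarily skew, and `ℓ`, one of these lines and single points form a forbidden cover.
-/

open Module
open scoped LinearAlgebra.Projectivization

namespace Projectivization

variable {K V : Type*} [Field K] [AddCommGroup V] [Module K V]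

def pointSpan (S : Set (ℙ K V)) : Submodule K V := Submodule.span K (Projectivization.rep '' S)

@[simp]
theorem pointSpan_empty : pointSpan (∅ : Set (ℙ K V)) = ⊥ := by
  simp [pointSpan]

theorem pointSpan_le_iff {S : Set (ℙ K V)} {W : Submodule K V} :
    pointSpan S ≤ W ↔ ∀ x ∈ S, x.rep ∈ W := by
  rw [pointSpan, Submodule.span_le, Set.image_subset_iff]
  rfl

theorem rep_mem_pointSpan {S : Set (ℙ K V)} {x : ℙ K V} (hx : x ∈ S) : x.rep ∈ pointSpan S :=
  Submodule.subset_span (Set.mem_image_of_mem _ hx)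

theorem pointSpan_mono {S T : Set (ℙ K V)} (h : S ⊆ T) : pointSpan S ≤ pointSpan T :=
  Submodule.span_mono (Set.image_mono h)

theorem finrank_pointSpan_le {S : Set (ℙ K V)} (hS : S.Finite) :
    finrank K (pointSpan S) ≤ S.ncard := by
  classical
  have := (hS.image Projectivization.rep).fintype
  calc finrank K (pointSpan S) ≤ (Projectivization.rep '' S).toFinset.card := finrank_span_le_card _
    _ = (Projectivization.rep '' S).ncard := (Set.ncard_eq_toFinset_card' _).symm
    _ ≤ S.ncard := Set.ncard_image_le hS

theorem rep_mem_span_singleton_iff {x y : ℙ K V} : x.rep ∈ K ∙ y.rep ↔ x = y := by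
  rw [Submodule.mem_span_singleton]
  constructor
  · rintro ⟨a, ha⟩
    rw [← mk_rep x, ← mk_rep y, mk_eq_mk_iff' K _ _ x.rep_nonzero y.rep_nonzero]
    exact ⟨a, ha⟩
  · rintro rfl
    exact ⟨1, one_smul K _⟩

theorem pointSpan_singleton (x : ℙ K V) : pointSpan {x} = K ∙ x.rep := by
  rw [pointSpan, Set.image_singleton]

theorem finrank_pointSpan_pair {x y : ℙ K V} (h : x ≠ y) : finrank K (pointSpan {x, y}) = 2 := by
  rw [pointSpan, Set.image_pair, ← Matrix.range_cons_cons_empty x.rep y.rep ![],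
    finrank_span_eq_card (linearIndependent_pair_iff_ne.2 h), Fintype.card_fin]

theorem rep_notMem_sup_span_singleton {W : Submodule K V} {x y : ℙ K V} (hx : x.rep ∉ W)
    (hy : y.rep ∉ W ⊔ K ∙ x.rep) : x.rep ∉ W ⊔ K ∙ y.rep := by
  have hW : ∀ v : V, W ⊔ K ∙ v = Submodule.span K (insert v W) := fun v ↦ by
    rw [Submodule.span_insert, Submodule.span_eq, sup_comm]
  rw [hW] at hy ⊢
  exact fun h ↦ hy (mem_span_insert_exchange h (by rwa [Submodule.span_eq]))

theorem rep_notMem_sup_span_singleton_of_disjoint {A B : Submodule K V} (hAB : Disjoint A B)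
    {x z : ℙ K V} (hx : x.rep ∈ A) (hz : z.rep ∈ A) (hxz : x ≠ z) : x.rep ∉ B ⊔ K ∙ z.rep := by
  simp only [Submodule.mem_sup, Submodule.mem_span_singleton]
  rintro ⟨b, hb, _, ⟨c, rfl⟩, hxb⟩
  have hbA : b ∈ A := by
    rw [eq_sub_of_add_eq hxb]
    exact A.sub_mem hx (A.smul_mem c hz)
  have hb0 : b = 0 := (Submodule.disjoint_def.1 hAB) b hbA hb
  rw [hb0, zero_add] at hxb
  exact hxz (rep_mem_span_singleton_iff.1 (Submodule.mem_span_singleton.2 ⟨c, hxb⟩))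

variable [FiniteDimensional K V]

theorem pointSpan_pair_eq {x y : ℙ K V} (hxy : x ≠ y) {W : Submodule K V}
    (hW : finrank K W ≤ 2) (hx : x.rep ∈ W) (hy : y.rep ∈ W) : pointSpan {x, y} = W :=
  Submodule.eq_of_le_of_finrank_le (pointSpan_le_iff.2 (by simp [hx, hy]))
    (hW.trans (finrank_pointSpan_pair hxy).ge)

theorem rep_notMem_pointSpan_pair {x a b : ℙ K V} (hxa : x ≠ a) (hxb : x ≠ b)
    (h : a = b ∨ pointSpan {x, a} ≠ pointSpan {x, b}) : x.rep ∉ pointSpan {a, b} := by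
  intro hx
  rcases h with rfl | h
  · rw [Set.pair_eq_singleton, pointSpan_singleton, rep_mem_span_singleton_iff] at hx
    exact hxa hx
  · have hab : a ≠ b := by rintro rfl; exact h rfl
    have hline := (finrank_pointSpan_pair hab).le
    have ha := rep_mem_pointSpan (show a ∈ ({a, b} : Set (ℙ K V)) by simp)
    have hb := rep_mem_pointSpan (show b ∈ ({a, b} : Set (ℙ K V)) by simp)
    exact h ((pointSpan_pair_eq hxa hline hx ha).trans (pointSpan_pair_eq hxb hline hx hb).symm)

end Projectivization

theorem Submodule.finrank_sup_le_three_or_disjoint {K V : Type*} [Field K] [AddCommGroup V]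
    [Module K V] [FiniteDimensional K V] {L₁ L₂ : Submodule K V}
    (h₁ : finrank K L₁ ≤ 2) (h₂ : finrank K L₂ ≤ 2) :
    finrank K ↥(L₁ ⊔ L₂) ≤ 3 ∨ finrank K L₁ = 2 ∧ finrank K L₂ = 2 ∧ L₁ ⊓ L₂ = ⊥ := by
  have := Submodule.finrank_sup_add_finrank_inf_eq L₁ L₂
  by_cases h : finrank K ↥(L₁ ⊔ L₂) ≤ 3
  · exact Or.inl h
  · exact Or.inr ⟨by omega, by omega, Submodule.finrank_eq_zero.1 (by omega)⟩

section Pairing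

variable {α β : Type*} [DecidableEq β] {f : α → β} {s : Finset α} {m : ℕ}

theorem card_filter_erase_erase_le [DecidableEq α] {a₀ b₀ : α} (hs : s.card ≤ 2 * m + 2)
    (hf : ∀ a ∈ s, (s.filter (f · = f a)).card ≤ m + 1)
    (ha₀ : a₀ ∈ s) (ha₀max : ∀ a ∈ s, (s.filter (f · = f a)).card ≤ (s.filter (f · = f a₀)).card)
    (hb₀ : b₀ ∈ s) (hb₀a₀ : f b₀ ≠ f a₀)
    (hb₀max : ∀ a ∈ s, f a ≠ f a₀ →
      (s.filter (f · = f a)).card ≤ (s.filter (f · = f b₀)).card)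
    {c : α} (hc : c ∈ s) :
    (((s.erase a₀).erase b₀).filter (f · = f c)).card ≤ m := by
  rw [Finset.filter_erase, Finset.filter_erase]
  have hF := hf c hc
  have hFa₀ := Finset.card_erase_le (s := s.filter (f · = f c)) (a := a₀)
  have hFb₀ := Finset.card_erase_le (s := (s.filter (f · = f c)).erase a₀) (a := b₀)
  by_cases hca : f c = f a₀
  · have := Finset.card_erase_of_mem (s := s.filter (f · = f c))
      (Finset.mem_filter.2 ⟨ha₀, hca.symm⟩)
    omega
  by_cases hcb : f c = f b₀
  · have := Finset.card_erase_of_mem (s := (s.filter (f · = f c)).erase a₀)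
      (Finset.mem_erase.2 ⟨fun h ↦ hb₀a₀ (h ▸ rfl), Finset.mem_filter.2 ⟨hb₀, hcb.symm⟩⟩)
    omega
  -- otherwise the fibres of `a₀`, `b₀` and `c` are disjoint, and the fibre of `c` is the smallest
  have hdisj : ∀ {u v : α}, f u ≠ f v →
      Disjoint (s.filter (f · = f u)) (s.filter (f · = f v)) := fun huv ↦
    Finset.disjoint_filter.2 fun _ _ h₁ h₂ ↦ huv (h₁.symm.trans h₂)
  have hsub : s.filter (f · = f a₀) ∪ s.filter (f · = f b₀) ∪ s.filter (f · = f c) ⊆ s :=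
    Finset.union_subset (Finset.union_subset (Finset.filter_subset _ _)
      (Finset.filter_subset _ _)) (Finset.filter_subset _ _)
  have hsum := Finset.card_le_card hsub
  rw [Finset.card_union_of_disjoint (Finset.disjoint_union_left.2
      ⟨hdisj (Ne.symm hca), hdisj (Ne.symm hcb)⟩),
    Finset.card_union_of_disjoint (hdisj (Ne.symm hb₀a₀))] at hsum
  have := hb₀max c hc hca
  have := ha₀max b₀ hb₀
  omega

theorem exists_pairs_cover (hs : s.card ≤ 2 * m)
    (hf : ∀ a ∈ s, (s.filter (f · = f a)).card ≤ m) :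
    ∃ P : Finset (α × α), P.card ≤ m ∧ P ⊆ s ×ˢ s ∧ (∀ p ∈ P, p.1 = p.2 ∨ f p.1 ≠ f p.2) ∧
      ∀ a ∈ s, ∃ p ∈ P, a = p.1 ∨ a = p.2 := by
  classical
  induction m generalizing s with
  | zero =>
    refine ⟨∅, le_rfl, Finset.empty_subset _, by simp, fun a ha ↦ ?_⟩
    simp [Finset.card_eq_zero.1 (Nat.le_zero.1 hs)] at ha
  | succ m ih =>
    by_cases hsmall : s.card ≤ m + 1
    · refine ⟨s.image fun a ↦ (a, a), Finset.card_image_le.trans hsmall, ?_, ?_, ?_⟩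
      · intro p hp
        obtain ⟨a, ha, rfl⟩ := Finset.mem_image.1 hp
        exact Finset.mem_product.2 ⟨ha, ha⟩
      · simp
      · exact fun a ha ↦ ⟨(a, a), Finset.mem_image_of_mem _ ha, Or.inl rfl⟩
    obtain ⟨a₀, ha₀, ha₀max⟩ := s.exists_max_image (fun a ↦ (s.filter (f · = f a)).card)
      (Finset.card_pos.1 (by omega))
    have hrest : (s.filter (f · ≠ f a₀)).Nonempty := by
      rw [← Finset.card_pos]
      simp only [ne_eq]
      have := Finset.card_filter_add_card_filter_not (s := s) (f · = f a₀)
      have := hf a₀ ha₀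
      omega
    obtain ⟨b₀, hb₀, hb₀max⟩ := (s.filter (f · ≠ f a₀)).exists_max_image
      (fun a ↦ (s.filter (f · = f a)).card) hrest
    obtain ⟨hb₀s, hb₀a₀⟩ := Finset.mem_filter.1 hb₀
    have hab : a₀ ≠ b₀ := fun h ↦ hb₀a₀ (h ▸ rfl)
    have hb₀e : b₀ ∈ s.erase a₀ := Finset.mem_erase.2 ⟨hab.symm, hb₀s⟩
    obtain ⟨P, hPcard, hPs, hPf, hPcov⟩ := ih (s := (s.erase a₀).erase b₀)
      (by rw [Finset.card_erase_of_mem hb₀e, Finset.card_erase_of_mem ha₀]; omega)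
      fun c hc ↦ card_filter_erase_erase_le (by omega) hf ha₀ ha₀max hb₀s hb₀a₀
        (fun a ha haa₀ ↦ hb₀max a (Finset.mem_filter.2 ⟨ha, haa₀⟩))
        (Finset.mem_of_mem_erase (Finset.mem_of_mem_erase hc))
    refine ⟨insert (a₀, b₀) P, (Finset.card_insert_le _ _).trans (by omega), ?_, ?_, ?_⟩
    · refine Finset.insert_subset (Finset.mem_product.2 ⟨ha₀, hb₀s⟩) (hPs.trans ?_)
      have hsub : (s.erase a₀).erase b₀ ⊆ s :=
        (Finset.erase_subset _ _).trans (Finset.erase_subset _ _)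
      exact Finset.product_subset_product hsub hsub
    · simp only [Finset.mem_insert, forall_eq_or_imp]
      exact ⟨Or.inr (Ne.symm hb₀a₀), hPf⟩
    · intro a ha
      by_cases h₀ : a = a₀ ∨ a = b₀
      · exact ⟨(a₀, b₀), Finset.mem_insert_self _ _, h₀⟩
      push Not at h₀
      obtain ⟨p, hp, hap⟩ := hPcov a (by simp [ha, h₀.1, h₀.2])
      exact ⟨p, Finset.mem_insert_of_mem hp, hap⟩

end Pairing

namespace Projectivization

variable {K V : Type*} [Field K] [AddCommGroup V] [Module K V]

def CoverableAvoiding (m : ℕ) (x : ℙ K V) (S : Set (ℙ K V)) : Prop :=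
  ∃ 𝒲 : Finset (Submodule K V), 𝒲.card ≤ m ∧ (∀ W ∈ 𝒲, x.rep ∉ W) ∧
    ∀ y ∈ S, ∃ W ∈ 𝒲, y.rep ∈ W

namespace CoverableAvoiding

variable {m m' : ℕ} {x : ℙ K V} {S T : Set (ℙ K V)}

theorem mono (h : CoverableAvoiding m x T) (hm : m ≤ m') (hST : S ⊆ T) :
    CoverableAvoiding m' x S :=
  let ⟨𝒲, hcard, hx, hcov⟩ := h
  ⟨𝒲, hcard.trans hm, hx, fun y hy ↦ hcov y (hST hy)⟩

theorem union (hS : CoverableAvoiding m x S) (hT : CoverableAvoiding m' x T) :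
    CoverableAvoiding (m + m') x (S ∪ T) := by
  classical
  obtain ⟨𝒲, h𝒲, hx𝒲, hS⟩ := hS
  obtain ⟨𝒱, h𝒱, hx𝒱, hT⟩ := hT
  refine ⟨𝒲 ∪ 𝒱, (Finset.card_union_le _ _).trans (add_le_add h𝒲 h𝒱), ?_, ?_⟩
  · simp only [Finset.mem_union]
    rintro W (hW | hW)
    exacts [hx𝒲 W hW, hx𝒱 W hW]
  · rintro y (hy | hy)
    · obtain ⟨W, hW, hyW⟩ := hS y hy
      exact ⟨W, Finset.mem_union_left _ hW, hyW⟩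
    · obtain ⟨W, hW, hyW⟩ := hT y hy
      exact ⟨W, Finset.mem_union_right _ hW, hyW⟩

theorem of_subspace {W : Submodule K V} (hx : x.rep ∉ W) (hS : ∀ y ∈ S, y.rep ∈ W) :
    CoverableAvoiding 1 x S :=
  ⟨{W}, (Finset.card_singleton W).le, by simpa using hx,
    fun y hy ↦ ⟨W, Finset.mem_singleton_self W, hS y hy⟩⟩

theorem of_finite (hS : S.Finite) (hx : x ∉ S) : CoverableAvoiding S.ncard x S := by
  classical
  refine ⟨hS.toFinset.image fun y ↦ K ∙ y.rep, ?_, ?_, fun y hy ↦ ?_⟩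
  · rw [Set.ncard_eq_toFinset_card _ hS]
    exact Finset.card_image_le
  · simp only [Finset.mem_image, Set.Finite.mem_toFinset]
    rintro _ ⟨y, hy, rfl⟩ hxy
    exact hx (rep_mem_span_singleton_iff.1 hxy ▸ hy)
  · exact ⟨_, Finset.mem_image_of_mem _ (hS.mem_toFinset.2 hy),
      Submodule.mem_span_singleton_self _⟩

theorem of_forall_line_ncard_le [FiniteDimensional K V] (hS : S.Finite) (hx : x ∉ S)
    (hcard : S.ncard ≤ 2 * m) (hline : ∀ z ∈ S, {w ∈ S | w.rep ∈ pointSpan {x, z}}.ncard ≤ m) :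
    CoverableAvoiding m x S := by
  classical
  -- pair off the points of `S` so that no pair is collinear with `x`
  obtain ⟨P, hPcard, hPS, hPf, hPcov⟩ :=
    exists_pairs_cover (f := fun w ↦ pointSpan {x, w}) (s := hS.toFinset)
      (by rwa [← Set.ncard_eq_toFinset_card _ hS]) fun z hz ↦ by
        rw [Set.Finite.mem_toFinset] at hz
        refine le_trans ?_ (hline z hz)
        rw [← Set.ncard_coe_finset]
        refine Set.ncard_le_ncard (fun w hw ↦ ?_) (hS.subset fun _ hw ↦ hw.1)
        simp only [Finset.coe_filter, Set.Finite.mem_toFinset, Set.mem_ofPred_eq] at hw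
        exact ⟨hw.1, hw.2 ▸ rep_mem_pointSpan (by simp)⟩
  have hPS' : ∀ p ∈ P, p.1 ∈ S ∧ p.2 ∈ S := fun p hp ↦ by
    simpa using Finset.mem_product.1 (hPS hp)
  refine ⟨P.image fun p ↦ pointSpan {p.1, p.2}, Finset.card_image_le.trans hPcard, ?_, ?_⟩
  · simp only [Finset.mem_image]
    rintro _ ⟨p, hp, rfl⟩
    exact rep_notMem_pointSpan_pair (fun h ↦ hx (h ▸ (hPS' p hp).1))
      (fun h ↦ hx (h ▸ (hPS' p hp).2)) (hPf p hp)
  · intro y hy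
    obtain ⟨p, hp, hyp⟩ := hPcov y (hS.mem_toFinset.2 hy)
    exact ⟨_, Finset.mem_image_of_mem _ hp,
      rep_mem_pointSpan (by rcases hyp with rfl | rfl <;> simp)⟩

end CoverableAvoiding

end Projectivization

theorem Subspace.exists_mem_dualAnnihilator_forall_ne_zero {K V : Type*} [Field K] [Infinite K]
    [AddCommGroup V] [Module K V] (W : Subspace K V) {T : Set V} (hT : T.Finite)
    (hTW : ∀ v ∈ T, v ∉ W) : ∃ φ ∈ W.dualAnnihilator, ∀ v ∈ T, φ v ≠ 0 := by
  by_contra! h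
  have := hT.to_subtype
  let p : T → Subspace K W.dualAnnihilator := fun v ↦
    LinearMap.ker ((Module.Dual.eval K V v).comp W.dualAnnihilator.subtype)
  obtain ⟨⟨v, hv⟩, htop⟩ := Subspace.exists_eq_top_of_iUnion_eq_univ (p := p)
    (Set.eq_univ_of_forall fun ⟨φ, hφ⟩ ↦ by
      obtain ⟨v, hv, hφv⟩ := h φ hφ
      exact Set.mem_iUnion.2 ⟨⟨v, hv⟩, by simpa [p] using hφv⟩)
  refine hTW v hv ((Subspace.forall_mem_dualAnnihilator_apply_eq_zero_iff W v).1 fun φ hφ ↦ ?_)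
  simpa using LinearMap.congr_fun (LinearMap.ker_eq_top.1 htop) ⟨φ, hφ⟩

section LinearForm

variable {k σ : Type*} [Field k] [Fintype σ] [DecidableEq σ]

noncomputable def linearForm (φ : Module.Dual k (σ → k)) : MvPolynomial σ k :=
  ∑ i, C (φ (Pi.single i 1)) * X i

theorem isHomogeneous_linearForm (φ : Module.Dual k (σ → k)) : (linearForm φ).IsHomogeneous 1 :=
  IsHomogeneous.sum _ _ _ fun i _ ↦ isHomogeneous_C_mul_X _ i

@[simp]
theorem eval_linearForm (φ : Module.Dual k (σ → k)) (v : σ → k) :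
    eval v (linearForm φ) = φ v := by
  have hsingle : ∀ i : σ, (fun j ↦ if i = j then (1 : k) else 0) = Pi.single i 1 := fun i ↦ by
    ext j
    rw [Pi.single_apply]
    exact if_congr eq_comm rfl rfl
  simp [linearForm, LinearMap.pi_apply_eq_sum_univ φ v, hsingle, mul_comm]

end LinearForm

open Projectivization

section ProjSpace

variable {k : Type*} [Field k] {n : ℕ}

theorem pointSpan_le_iff_subset_projSet {S : Set (ProjSpace k n)}
    {W : Submodule k (Fin (n + 1) → k)} : pointSpan S ≤ W ↔ S ⊆ projSet W :=
  pointSpan_le_iff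

theorem subset_projSet_pointSpan (S : Set (ProjSpace k n)) : S ⊆ projSet (pointSpan S) :=
  pointSpan_le_iff_subset_projSet.1 le_rfl

theorem finrank_pointSpan_le_of_subset_projSet {S : Set (ProjSpace k n)}
    {W : Submodule k (Fin (n + 1) → k)} (h : S ⊆ projSet W) :
    finrank k (pointSpan S) ≤ finrank k W :=
  Submodule.finrank_mono (pointSpan_le_iff_subset_projSet.2 h)

theorem projSet_mono {W W' : Submodule k (Fin (n + 1) → k)} (h : W ≤ W') :
    projSet W ⊆ projSet W' :=
  fun _ hx ↦ h hx

theorem exists_forall_ncard_le_ncard_inter {Γ : Set (ProjSpace k n)} (hfin : Γ.Finite) (d : ℕ) :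
    ∃ W : Submodule k (Fin (n + 1) → k), finrank k W ≤ d ∧
      ∀ S ⊆ Γ, finrank k (pointSpan S) ≤ d → S.ncard ≤ (Γ ∩ projSet W).ncard := by
  set N := {c | ∃ W : Submodule k (Fin (n + 1) → k), finrank k W ≤ d ∧ (Γ ∩ projSet W).ncard = c}
  have hbdd : BddAbove N := ⟨Γ.ncard, by
    rintro _ ⟨W, -, rfl⟩
    exact Set.ncard_inter_le_ncard_left _ _ hfin⟩
  obtain ⟨W, hW, hWN⟩ := Nat.sSup_mem (show N.Nonempty from ⟨_, ⊥, by simp, rfl⟩) hbdd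
  refine ⟨W, hW, fun S hS hSd ↦ ?_⟩
  calc S.ncard ≤ (Γ ∩ projSet (pointSpan S)).ncard :=
        Set.ncard_le_ncard (Set.subset_inter hS (subset_projSet_pointSpan S)) (hfin.inter_of_left _)
    _ ≤ sSup N := le_csSup hbdd ⟨_, hSd, rfl⟩
    _ = (Γ ∩ projSet W).ncard := hWN.symm

theorem disjoint_projSet {L₁ L₂ : Submodule k (Fin (n + 1) → k)} (h : Disjoint L₁ L₂) :
    Disjoint (projSet L₁) (projSet L₂) :=
  Set.disjoint_left.2 fun x h₁ h₂ ↦ x.rep_nonzero (Submodule.disjoint_def.1 h _ h₁ h₂)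

theorem le_of_forall_ncard_le {Γ : Set (ProjSpace k n)} (hfin : Γ.Finite) {d t : ℕ}
    (hmax : ∀ S ⊆ Γ, finrank k (pointSpan S) ≤ d → S.ncard ≤ t) (hd : d ≤ Γ.ncard) : d ≤ t := by
  obtain ⟨S, hSΓ, rfl⟩ := Set.exists_subset_card_eq hd
  exact hmax S hSΓ (finrank_pointSpan_le (hfin.subset hSΓ))

theorem union_projSet_subset_projSet_sup {L₁ L₂ : Submodule k (Fin (n + 1) → k)} :
    projSet L₁ ∪ projSet L₂ ⊆ projSet (L₁ ⊔ L₂) :=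
  Set.union_subset (projSet_mono le_sup_left) (projSet_mono le_sup_right)

def PlanarOrOnTwoLines (Γ : Set (ProjSpace k n)) : Prop :=
  finrank k (pointSpan Γ) ≤ 3 ∨ ∃ L₁ L₂ : Submodule k (Fin (n + 1) → k),
    finrank k L₁ ≤ 2 ∧ finrank k L₂ ≤ 2 ∧ Γ ⊆ projSet L₁ ∪ projSet L₂

end ProjSpace

namespace IsCB

variable {k : Type*} [Field k] {n r : ℕ} {Γ : Set (ProjSpace k n)}

theorem not_coverableAvoiding (hCB : IsCB r Γ) {x : ProjSpace k n} (hx : x ∈ Γ) :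
    ¬ CoverableAvoiding r x (Γ \ {x}) := by
  classical
  rintro ⟨𝒲, hcard, hx𝒲, hcov⟩
  have hsep : ∀ W : Submodule k (Fin (n + 1) → k), x.rep ∉ W →
      ∃ φ ∈ W.dualAnnihilator, φ x.rep ≠ 0 := fun W hW ↦ by
    simpa using (Subspace.forall_mem_dualAnnihilator_apply_eq_zero_iff W x.rep).not.2 hW
  choose! φ hφW hφx using fun W hW ↦ hsep W (hx𝒲 W hW)
  obtain ⟨ψ, -, hψx⟩ := hsep ⊥ (by simpa using x.rep_nonzero)
  -- a product of linear forms, one vanishing on each `W ∈ 𝒲`, padded to degree `r`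
  let F := (∏ W ∈ 𝒲, linearForm (φ W)) * linearForm ψ ^ (r - 𝒲.card)
  have hF : F.IsHomogeneous r := by
    have := (IsHomogeneous.prod 𝒲 _ (fun _ ↦ 1) fun W _ ↦ isHomogeneous_linearForm (φ W)).mul
      ((isHomogeneous_linearForm ψ).pow (r - 𝒲.card))
    simpa [Nat.add_sub_cancel' hcard] using this
  have hFx := hCB F hF x hx fun y hy hyx ↦ by
    obtain ⟨W, hW, hyW⟩ := hcov y ⟨hy, hyx⟩
    simp only [F, map_mul, map_prod, eval_linearForm]
    exact mul_eq_zero_of_left (Finset.prod_eq_zero hW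
      ((Submodule.mem_dualAnnihilator _).1 (hφW W hW) y.rep hyW)) _
  simp only [F, map_mul, map_prod, map_pow, eval_linearForm, mul_eq_zero, pow_eq_zero_iff',
    Finset.prod_eq_zero_iff] at hFx
  rcases hFx with ⟨W, hW, hWx⟩ | ⟨hψ, -⟩
  exacts [hφx W hW hWx, hψx hψ]

theorem add_two_le_ncard (hCB : IsCB r Γ) (hfin : Γ.Finite) (hne : Γ.Nonempty) :
    r + 2 ≤ Γ.ncard := by
  obtain ⟨x, hx⟩ := hne
  by_contra! h
  refine hCB.not_coverableAvoiding hx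
    ((CoverableAvoiding.of_finite hfin.sdiff (by simp)).mono ?_ le_rfl)
  rw [Set.ncard_sdiff_singleton_of_mem hx]
  omega

theorem rep_mem_pointSpan_sdiff_singleton (hCB : IsCB r Γ) (hr : 1 ≤ r) {x : ProjSpace k n}
    (hx : x ∈ Γ) : x.rep ∈ pointSpan (Γ \ {x}) := by
  by_contra h
  exact hCB.not_coverableAvoiding hx
    ((CoverableAvoiding.of_subspace h fun _ hy ↦ rep_mem_pointSpan hy).mono hr le_rfl)

theorem finrank_pointSpan_lt_ncard (hCB : IsCB r Γ) (hr : 1 ≤ r) (hfin : Γ.Finite)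
    (hne : Γ.Nonempty) : finrank k (pointSpan Γ) < Γ.ncard := by
  obtain ⟨x, hx⟩ := hne
  have hspan : pointSpan Γ = pointSpan (Γ \ {x}) := by
    refine le_antisymm (pointSpan_le_iff.2 fun y hy ↦ ?_) (pointSpan_mono Set.sdiff_subset)
    rcases eq_or_ne y x with rfl | hyx
    · exact hCB.rep_mem_pointSpan_sdiff_singleton hr hx
    · exact rep_mem_pointSpan ⟨hy, hyx⟩
  have := finrank_pointSpan_le (hfin.sdiff (t := {x}))
  rw [Set.ncard_sdiff_singleton_of_mem hx, ← hspan] at this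
  have := (Set.ncard_pos hfin).2 ⟨x, hx⟩
  omega

theorem exists_line_lt_ncard_inter {m : ℕ} (hCB : IsCB (m + 1) Γ) (hfin : Γ.Finite)
    {ℓ : Submodule k (Fin (n + 1) → k)} {x y : ProjSpace k n} (hx : x ∈ Γ \ projSet ℓ)
    (hy : y ∈ Γ \ projSet ℓ) (hyx : y.rep ∉ ℓ ⊔ k ∙ x.rep)
    (hcard : (Γ \ projSet ℓ).ncard ≤ 2 * m + 2) :
    ∃ L : Submodule k (Fin (n + 1) → k), finrank k L ≤ 2 ∧
      m + 1 < ((Γ \ projSet ℓ) ∩ projSet L).ncard := by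
  by_contra! hline
  have hxy : x ≠ y := by
    rintro rfl
    exact hyx (Submodule.mem_sup_right (Submodule.mem_span_singleton_self _))
  have hpair : ({x, y} : Set (ProjSpace k n)) ⊆ Γ \ projSet ℓ := Set.insert_subset hx (by simpa)
  have hS : CoverableAvoiding m x ((Γ \ projSet ℓ) \ {x, y}) := by
    refine .of_forall_line_ncard_le hfin.sdiff.sdiff (by simp) ?_ fun z hz ↦ ?_
    · rw [Set.ncard_sdiff hpair, Set.ncard_pair hxy]
      omega
    · have hL : x ∈ (Γ \ projSet ℓ) ∩ projSet (pointSpan {x, z}) :=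
        ⟨hx, rep_mem_pointSpan (by simp)⟩
      calc {w ∈ (Γ \ projSet ℓ) \ {x, y} | w.rep ∈ pointSpan {x, z}}.ncard
          ≤ (((Γ \ projSet ℓ) ∩ projSet (pointSpan {x, z})) \ {x}).ncard :=
            Set.ncard_le_ncard (fun w hw ↦ ⟨⟨hw.1.1, hw.2⟩, fun h ↦ hw.1.2 (Or.inl h)⟩)
              (hfin.sdiff.inter_of_left _).sdiff
        _ = ((Γ \ projSet ℓ) ∩ projSet (pointSpan {x, z})).ncard - 1 :=
            Set.ncard_sdiff_singleton_of_mem hL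
        _ ≤ m := by
            have := hline _ ((finrank_pointSpan_le (Set.toFinite _)).trans
              ((Set.ncard_insert_le x {z}).trans (by simp)))
            omega
  -- the plane through `ℓ` and `y`, together with `m` lines, covers `Γ \ {x}` while missing `x`
  refine hCB.not_coverableAvoiding hx.1 <|
    ((CoverableAvoiding.of_subspace (rep_notMem_sup_span_singleton hx.2 hyx)
      fun _ h ↦ h).union hS).mono (by omega) fun z ⟨hz, hzx⟩ ↦ ?_
  by_cases hzℓ : z ∈ projSet ℓ
  · exact Or.inl (Submodule.mem_sup_left hzℓ)
  rcases eq_or_ne z y with rfl | hzy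
  · exact Or.inl (Submodule.mem_sup_right (Submodule.mem_span_singleton_self _))
  · exact Or.inr ⟨⟨hz, hzℓ⟩, fun h ↦ h.elim hzx hzy⟩

theorem lt_ncard_inter_of_disjoint {m : ℕ} (hCB : IsCB m Γ) (hm : 2 ≤ m) (hfin : Γ.Finite)
    {ℓ A B : Submodule k (Fin (n + 1) → k)} (hAB : Disjoint A B)
    (hΓ : Γ \ projSet ℓ ⊆ projSet A ∪ projSet B) {x : ProjSpace k n}
    (hx : x ∈ (Γ \ projSet ℓ) ∩ projSet A) : m < ((Γ \ projSet ℓ) ∩ projSet A).ncard := by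
  by_contra! hA
  set T := ((Γ \ projSet ℓ) ∩ projSet A) \ {x}
  have hxB : x.rep ∉ B := fun h ↦ x.rep_nonzero (Submodule.disjoint_def.1 hAB _ hx.2 h)
  have hℓ := CoverableAvoiding.of_subspace (S := projSet ℓ) hx.1.2 fun _ h ↦ h
  have hcov : Γ \ {x} ⊆ projSet ℓ ∪ (projSet B ∪ T) := by
    rintro z ⟨hz, hzx⟩
    by_cases hzℓ : z ∈ projSet ℓ
    · exact Or.inl hzℓ
    rcases hΓ ⟨hz, hzℓ⟩ with hzA | hzB
    exacts [Or.inr (Or.inr ⟨⟨⟨hz, hzℓ⟩, hzA⟩, hzx⟩), Or.inr (Or.inl hzB)]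
  rcases T.eq_empty_or_nonempty with hT | ⟨z, hz⟩
  · rw [hT, Set.union_empty] at hcov
    exact hCB.not_coverableAvoiding hx.1.1
      ((hℓ.union (.of_subspace hxB fun _ h ↦ h)).mono hm hcov)
  -- replacing `B` by the plane through `B` and a second point `z` of `A` saves one subspace
  have hTfin : T.Finite := (hfin.sdiff.inter_of_left _).sdiff
  have hT : T.ncard = ((Γ \ projSet ℓ) ∩ projSet A).ncard - 1 :=
    Set.ncard_sdiff_singleton_of_mem hx
  have hTz : (T \ {z}).ncard = T.ncard - 1 := Set.ncard_sdiff_singleton_of_mem hz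
  have hTpos : 0 < T.ncard := (Set.ncard_pos hTfin).2 ⟨z, hz⟩
  refine hCB.not_coverableAvoiding hx.1.1 ((hℓ.union ((CoverableAvoiding.of_subspace
    (rep_notMem_sup_span_singleton_of_disjoint hAB hx.2 hz.1.2 (Ne.symm hz.2)) fun _ h ↦ h).union
    (.of_finite (S := T \ {z}) hTfin.sdiff (by simp [T])))).mono (by omega) ?_)
  intro w hw
  rcases hcov hw with hwℓ | hwB | hwT
  · exact Or.inl hwℓ
  · exact Or.inr (Or.inl (Submodule.mem_sup_left hwB))
  rcases eq_or_ne w z with rfl | hwz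
  · exact Or.inr (Or.inl (Submodule.mem_sup_right (Submodule.mem_span_singleton_self _)))
  · exact Or.inr (Or.inr ⟨hwT, hwz⟩)

theorem not_subset_union_of_disjoint (hCB : IsCB (r + 2) Γ) (hfin : Γ.Finite)
    (hcard : Γ.ncard ≤ 3 * r + 7) {ℓ : Submodule k (Fin (n + 1) → k)}
    (hmax : ∀ S ⊆ Γ, finrank k (pointSpan S) ≤ 2 → S.ncard ≤ (Γ ∩ projSet ℓ).ncard)
    (hΓ' : 2 * r + 4 ≤ (Γ \ projSet ℓ).ncard) {L₁ L₂ : Submodule k (Fin (n + 1) → k)}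
    (h₁ : finrank k L₁ ≤ 2) (h₂ : finrank k L₂ ≤ 2) (hdisj : Disjoint L₁ L₂) :
    ¬ Γ \ projSet ℓ ⊆ projSet L₁ ∪ projSet L₂ := by
  intro hsub
  wlog h : ((Γ \ projSet ℓ) ∩ projSet L₁).ncard ≤ ((Γ \ projSet ℓ) ∩ projSet L₂).ncard
    generalizing L₁ L₂
  · exact this h₂ h₁ hdisj.symm (by rwa [Set.union_comm]) (by omega)
  have hsum : ((Γ \ projSet ℓ) ∩ projSet L₁).ncard + ((Γ \ projSet ℓ) ∩ projSet L₂).ncard =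
      (Γ \ projSet ℓ).ncard := by
    rw [← Set.ncard_union_eq ((disjoint_projSet hdisj).mono Set.inter_subset_right
      Set.inter_subset_right) (hfin.sdiff.inter_of_left _) (hfin.sdiff.inter_of_left _),
      ← Set.inter_union_distrib_left, Set.inter_eq_left.2 hsub]
  have hL : ∀ L : Submodule k (Fin (n + 1) → k), finrank k L ≤ 2 →
      ((Γ \ projSet ℓ) ∩ projSet L).ncard ≤ (Γ ∩ projSet ℓ).ncard := fun L hL ↦
    hmax _ (Set.inter_subset_left.trans Set.sdiff_subset)
      ((finrank_pointSpan_le_of_subset_projSet Set.inter_subset_right).trans hL)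
  have := hL L₁ h₁
  have := hL L₂ h₂
  have hsplit := Set.ncard_inter_add_ncard_sdiff_eq_ncard Γ (projSet ℓ) hfin
  obtain ⟨x, hx⟩ := Set.nonempty_of_ncard_ne_zero (s := (Γ \ projSet ℓ) ∩ projSet L₁) (by omega)
  have := hCB.lt_ncard_inter_of_disjoint (by omega) hfin hdisj hsub hx
  omega

variable [Infinite k]

theorem sdiff_projSet (hCB : IsCB (r + 1) Γ) (hfin : Γ.Finite) (W : Submodule k (Fin (n + 1) → k)) :
    IsCB r (Γ \ projSet W) := by
  obtain ⟨φ, hφW, hφ⟩ := Subspace.exists_mem_dualAnnihilator_forall_ne_zero W (hfin.sdiff.image _)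
    (T := Projectivization.rep '' (Γ \ projSet W)) (by rintro _ ⟨y, hy, rfl⟩; exact hy.2)
  intro G hG x hx hGx
  -- multiply by a linear form vanishing on `W` but at no point of `Γ \ W`
  have hFx := hCB (linearForm φ * G) (by simpa [add_comm] using (isHomogeneous_linearForm φ).mul hG)
    x hx.1 fun y hy hyx ↦ by
      by_cases hyW : y ∈ projSet W
      · simp [(Submodule.mem_dualAnnihilator φ).1 hφW _ hyW]
      · simp [hGx y ⟨hy, hyW⟩ hyx]
  simpa [hφ x.rep ⟨x, hx, rfl⟩] using hFx

theorem add_two_le_ncard_sdiff (hCB : IsCB (r + 1) Γ) (hfin : Γ.Finite)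
    {W : Submodule k (Fin (n + 1) → k)} (hW : ¬ Γ ⊆ projSet W) :
    r + 2 ≤ (Γ \ projSet W).ncard :=
  (hCB.sdiff_projSet hfin W).add_two_le_ncard hfin.sdiff (Set.sdiff_nonempty.2 hW)

theorem finrank_pointSpan_le_two (hCB : IsCB r Γ) (hfin : Γ.Finite)
    (hcard : Γ.ncard ≤ 2 * r + 1) : finrank k (pointSpan Γ) ≤ 2 := by
  induction r generalizing Γ with
  | zero => exact (finrank_pointSpan_le hfin).trans (by omega)
  | succ r ih =>
    by_cases h2 : Γ.ncard ≤ 2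
    · exact (finrank_pointSpan_le hfin).trans h2
    obtain ⟨ℓ, hℓ, hmax⟩ := exists_forall_ncard_le_ncard_inter hfin 2
    by_cases hΓℓ : Γ ⊆ projSet ℓ
    · exact (finrank_pointSpan_le_of_subset_projSet hΓℓ).trans hℓ
    have ht := le_of_forall_ncard_le hfin hmax (by omega)
    have hsplit := Set.ncard_inter_add_ncard_sdiff_eq_ncard Γ (projSet ℓ) hfin
    have hrest := hCB.add_two_le_ncard_sdiff hfin hΓℓ
    have := hmax _ Set.sdiff_subset (ih (hCB.sdiff_projSet hfin ℓ) hfin.sdiff (by omega))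
    omega

theorem three_lt_finrank_pointSpan_sdiff (hCB : IsCB (r + 2) Γ) (hfin : Γ.Finite)
    (hcard : Γ.ncard ≤ 3 * r + 7) (hΓ : 3 < finrank k (pointSpan Γ))
    {ℓ : Submodule k (Fin (n + 1) → k)} (hℓ : finrank k ℓ ≤ 2)
    (hΓ' : 2 < finrank k (pointSpan (Γ \ projSet ℓ))) :
    3 < finrank k (pointSpan (Γ \ projSet ℓ)) := by
  by_contra! hplane
  have hΓ'CB : IsCB (r + 1) (Γ \ projSet ℓ) := hCB.sdiff_projSet hfin ℓ
  -- the at least `r + 3` points of `Γ` off the plane spanned by `Γ \ ℓ` all lie on `ℓ`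
  have hoff := hCB.add_two_le_ncard_sdiff hfin (W := pointSpan (Γ \ projSet ℓ)) fun h ↦
    hΓ.not_ge ((finrank_pointSpan_le_of_subset_projSet h).trans hplane)
  have hoffℓ : (Γ \ projSet (pointSpan (Γ \ projSet ℓ))).ncard ≤ (Γ ∩ projSet ℓ).ncard :=
    Set.ncard_le_ncard (fun z hz ↦ ⟨hz.1, by_contra fun h ↦
      hz.2 (subset_projSet_pointSpan _ ⟨hz.1, h⟩)⟩) (hfin.inter_of_left _)
  have hsplit := Set.ncard_inter_add_ncard_sdiff_eq_ncard Γ (projSet ℓ) hfin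
  obtain ⟨x, hx⟩ : (Γ \ projSet ℓ).Nonempty := Set.nonempty_iff_ne_empty.2 fun h ↦ by
    rw [h, pointSpan_empty, finrank_bot] at hΓ'
    omega
  have hℓx : finrank k ↥(ℓ ⊔ k ∙ x.rep) ≤ 3 := by
    have := Submodule.finrank_add_le_finrank_add_finrank ℓ (k ∙ x.rep)
    rw [finrank_span_singleton x.rep_nonzero] at this
    omega
  obtain ⟨y, hyΓ, hyx⟩ := Set.not_subset.1 fun h ↦
    hΓ.not_ge ((finrank_pointSpan_le_of_subset_projSet h).trans hℓx)
  have hyℓ : y ∉ projSet ℓ := fun h ↦ hyx (Submodule.mem_sup_left h)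
  obtain ⟨L, hL, hLcard⟩ := hCB.exists_line_lt_ncard_inter (m := r + 1) hfin hx ⟨hyΓ, hyℓ⟩ hyx
    (by omega)
  have hΓ'L := hΓ'CB.add_two_le_ncard_sdiff hfin.sdiff (W := L) fun h ↦
    hΓ'.not_ge ((finrank_pointSpan_le_of_subset_projSet h).trans hL)
  have := Set.ncard_inter_add_ncard_sdiff_eq_ncard (Γ \ projSet ℓ) (projSet L) hfin.sdiff
  omega

theorem exists_three_collinear (hCB : IsCB (r + 2) Γ) (hfin : Γ.Finite)
    (hcard : Γ.ncard ≤ 3 * r + 7) (hΓ : 3 < finrank k (pointSpan Γ))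
    (ih : ∀ Δ ⊆ Γ, IsCB (r + 1) Δ → Δ.ncard ≤ 3 * r + 4 → PlanarOrOnTwoLines Δ) :
    ∃ S ⊆ Γ, finrank k (pointSpan S) ≤ 2 ∧ 3 ≤ S.ncard := by
  by_contra! hline
  obtain ⟨P, hP, hPmax⟩ := exists_forall_ncard_le_ncard_inter hfin 3
  have hne : Γ.Nonempty := Set.nonempty_iff_ne_empty.2 fun h ↦ by
    rw [h, pointSpan_empty, finrank_bot] at hΓ
    omega
  have hs := le_of_forall_ncard_le hfin hPmax (by have := hCB.add_two_le_ncard hfin hne; omega)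
  have hΔCB : IsCB (r + 1) (Γ \ projSet P) := hCB.sdiff_projSet hfin P
  have hΔ := hCB.add_two_le_ncard_sdiff hfin (W := P) fun h ↦
    hΓ.not_ge ((finrank_pointSpan_le_of_subset_projSet h).trans hP)
  have hsplit := Set.ncard_inter_add_ncard_sdiff_eq_ncard Γ (projSet P) hfin
  have hΔline : 2 * r + 4 ≤ (Γ \ projSet P).ncard := by
    by_contra!
    have := hline _ Set.sdiff_subset (hΔCB.finrank_pointSpan_le_two hfin.sdiff (by omega))
    omega
  have hΔplane : finrank k (pointSpan (Γ \ projSet P)) ≤ 3 := by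
    rcases ih _ Set.sdiff_subset hΔCB (by omega) with h | ⟨L₁, L₂, h₁, h₂, hsub⟩
    · exact h
    -- two lines hold at most four points of `Γ \ P`, so `r = 0` and `Γ \ P` is a `CB(1)` set of
    -- four points
    have hL : ∀ L : Submodule k (Fin (n + 1) → k), finrank k L ≤ 2 →
        ((Γ \ projSet P) ∩ projSet L).ncard < 3 := fun L hL ↦
      hline _ (Set.inter_subset_left.trans Set.sdiff_subset)
        ((finrank_pointSpan_le_of_subset_projSet Set.inter_subset_right).trans hL)
    have hcov := (Set.ncard_le_ncard (t := (Γ \ projSet P) ∩ (projSet L₁ ∪ projSet L₂))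
      (Set.subset_inter le_rfl hsub) (hfin.sdiff.inter_of_left _)).trans
      (Set.inter_union_distrib_left _ _ _ ▸ Set.ncard_union_le _ _)
    have := hL L₁ h₁
    have := hL L₂ h₂
    have := hΔCB.finrank_pointSpan_lt_ncard le_add_self hfin.sdiff
      (Set.nonempty_of_ncard_ne_zero (by omega))
    omega
  have := hPmax _ Set.sdiff_subset hΔplane
  omega

theorem planarOrOnTwoLines_of_forall_subset (hCB : IsCB (r + 2) Γ) (hfin : Γ.Finite)
    (hcard : Γ.ncard ≤ 3 * r + 7)
    (ih : ∀ Δ ⊆ Γ, IsCB (r + 1) Δ → Δ.ncard ≤ 3 * r + 4 → PlanarOrOnTwoLines Δ) :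
    PlanarOrOnTwoLines Γ := by
  by_contra h
  simp only [PlanarOrOnTwoLines, not_or, not_le, not_exists, not_and] at h
  obtain ⟨hΓ, hlines⟩ := h
  obtain ⟨ℓ, hℓ, hmax⟩ := exists_forall_ncard_le_ncard_inter hfin 2
  have hΓ'CB : IsCB (r + 1) (Γ \ projSet ℓ) := hCB.sdiff_projSet hfin ℓ
  have hΓ'line : 2 < finrank k (pointSpan (Γ \ projSet ℓ)) := by
    by_contra! h
    exact hlines ℓ _ hℓ h fun z hz ↦ (em (z ∈ projSet ℓ)).imp id fun hzℓ ↦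
      subset_projSet_pointSpan _ ⟨hz, hzℓ⟩
  have hΓ'card : 2 * r + 4 ≤ (Γ \ projSet ℓ).ncard := by
    by_contra!
    exact hΓ'line.not_ge (hΓ'CB.finrank_pointSpan_le_two hfin.sdiff (by omega))
  have hΓ'plane := hCB.three_lt_finrank_pointSpan_sdiff hfin hcard hΓ hℓ hΓ'line
  have hsplit := Set.ncard_inter_add_ncard_sdiff_eq_ncard Γ (projSet ℓ) hfin
  obtain ⟨S, hSΓ, hS, hS3⟩ := hCB.exists_three_collinear hfin hcard hΓ ih
  have := hmax S hSΓ hS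
  rcases ih _ Set.sdiff_subset hΓ'CB (by omega) with h | ⟨L₁, L₂, h₁, h₂, hsub⟩
  · omega
  rcases Submodule.finrank_sup_le_three_or_disjoint h₁ h₂ with h | ⟨-, -, hdisj⟩
  · exact hΓ'plane.not_ge ((finrank_pointSpan_le_of_subset_projSet
      (hsub.trans union_projSet_subset_projSet_sup)).trans h)
  · exact hCB.not_subset_union_of_disjoint hfin hcard hmax hΓ'card h₁ h₂ (disjoint_iff.2 hdisj) hsub

theorem planarOrOnTwoLines (hCB : IsCB (r + 1) Γ) (hfin : Γ.Finite)
    (hcard : Γ.ncard ≤ 3 * r + 4) : PlanarOrOnTwoLines Γ := by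
  induction r generalizing Γ with
  | zero =>
    left
    rcases Γ.eq_empty_or_nonempty with rfl | hne
    · rw [pointSpan_empty, finrank_bot]
      omega
    · have := hCB.finrank_pointSpan_lt_ncard le_rfl hfin hne
      omega
  | succ r ih =>
    exact hCB.planarOrOnTwoLines_of_forall_subset hfin hcard fun Δ hΔ hΔCB hΔcard ↦
      ih hΔCB (hfin.subset hΔ) hΔcard

end IsCB

/-- Case `d = 2`: a finite set satisfying `CB(r)` with at most `3r + 1` points lies on a
projective linear subspace of dimension at most `2`, or on two disjoint lines. -/
theorem case_d_eq_two {k : Type*} [Field k] [Infinite k] {n : ℕ} (r : ℕ) (hr : 1 ≤ r)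
    (Γ : Set (ProjSpace k n)) (hfin : Γ.Finite) (hCB : IsCB r Γ)
    (hcard : Γ.ncard ≤ 3 * r + 1) :
    (∃ W : Submodule k (Fin (n + 1) → k),
      Module.finrank k W ≤ 3 ∧ Γ ⊆ projSet W) ∨
    (∃ L₁ L₂ : Submodule k (Fin (n + 1) → k),
      Module.finrank k L₁ = 2 ∧ Module.finrank k L₂ = 2 ∧ L₁ ⊓ L₂ = ⊥ ∧
      Γ ⊆ projSet L₁ ∪ projSet L₂) := by
  obtain ⟨r, rfl⟩ : ∃ r', r = r' + 1 := ⟨r - 1, by omega⟩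
  rcases hCB.planarOrOnTwoLines hfin (by omega) with hP | ⟨L₁, L₂, h₁, h₂, hsub⟩
  · exact Or.inl ⟨pointSpan Γ, hP, subset_projSet_pointSpan Γ⟩
  rcases Submodule.finrank_sup_le_three_or_disjoint h₁ h₂ with h | ⟨e₁, e₂, hbot⟩
  · exact Or.inl ⟨L₁ ⊔ L₂, h, hsub.trans union_projSet_subset_projSet_sup⟩
  · exact Or.inr ⟨L₁, L₂, e₁, e₂, hbot, hsub⟩
end

section
/- Sharpness of the bound: For every d ≥ 1 and every r ≥ 2, there exists a finite set Γ ⊆ ℙ^{d+1} with |Γ| = (d+1)r + 2 that satisfies CB(r) but does not lie on any plane configuration of dimension at most d. (Such a set is given by any (d+1)r + 2 distinct points on a rational normal curve of degree d + 1 in ℙ^{d+1}, e.g., points of the form [1 : t : t² : … : t^{d+1}] for distinct t ∈ k.) -/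
/-!
Take `Γ` to be `(d+1)r + 2` points `[1 : t : … : t^(d+1)]` of the rational normal curve.
A form of degree `r` restricts to a polynomial of degree at most `(d+1)r` in `t`, so if it
vanishes at all points of `Γ` but one it vanishes identically on the curve: this is `CB(r)`.
Any `d+2` points of the curve are linearly independent (Vandermonde), so a plane of projective
dimension `m - 1 ≤ d` contains at most `m ≤ 2(m - 1)` points of `Γ`; a configuration of dimension
at most `d` therefore covers at most `2d < |Γ|` of them.
-/

open MvPolynomial

namespace MvPolynomial.IsHomogeneous

variable {R σ : Type*} [CommSemiring R] {F : MvPolynomial σ R} {r : ℕ}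

theorem eval_smul_s19 (hF : F.IsHomogeneous r) (a : R) (x : σ → R) :
    eval (a • x) F = a ^ r * eval x F := by
  rw [eval_eq, eval_eq, Finset.mul_sum]
  refine Finset.sum_congr rfl fun m hm => ?_
  have hdeg : ∑ i ∈ m.support, m i = r := by
    simpa [Finsupp.weight_apply, Finsupp.sum] using hF (mem_support_iff.mp hm)
  simp only [Pi.smul_apply, smul_eq_mul, mul_pow, Finset.prod_mul_distrib,
    Finset.prod_pow_eq_pow_sum, hdeg]
  ring

theorem natDegree_aeval_le (hF : F.IsHomogeneous r) {g : σ → Polynomial R} {n : ℕ}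
    (hg : ∀ i, (g i).natDegree ≤ n) : (MvPolynomial.aeval g F).natDegree ≤ n * r := by
  rw [F.as_sum, map_sum]
  refine Polynomial.natDegree_sum_le_of_forall_le _ _ fun m hm => ?_
  have hdeg : ∑ i ∈ m.support, m i = r := by
    simpa [Finsupp.weight_apply, Finsupp.sum] using hF (mem_support_iff.mp hm)
  rw [aeval_monomial, Algebra.algebraMap_eq_smul_one, smul_mul_assoc, one_mul, Finsupp.prod]
  calc _ ≤ (∏ i ∈ m.support, g i ^ m i).natDegree := Polynomial.natDegree_smul_le _ _
    _ ≤ ∑ i ∈ m.support, m i * (g i).natDegree :=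
      (Polynomial.natDegree_prod_le _ _).trans
        (Finset.sum_le_sum fun i _ => Polynomial.natDegree_pow_le)
    _ ≤ ∑ i ∈ m.support, m i * n := Finset.sum_le_sum fun i _ => Nat.mul_le_mul_left _ (hg i)
    _ = n * r := by rw [← Finset.sum_mul, hdeg, mul_comm]

end MvPolynomial.IsHomogeneous

theorem MvPolynomial.IsHomogeneous.eval_rep_mk_eq_zero_iff {k : Type*} [Field k] {σ : Type*}
    {F : MvPolynomial σ k} {r : ℕ} (hF : F.IsHomogeneous r) {v : σ → k} (hv : v ≠ 0) :
    eval (Projectivization.mk k v hv).rep F = 0 ↔ eval v F = 0 := by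
  obtain ⟨a, ha⟩ := Projectivization.exists_smul_eq_mk_rep k v hv
  rw [← ha, Units.smul_def, hF.eval_smul_s19, mul_eq_zero_iff_left (pow_ne_zero r a.ne_zero)]

theorem mk_mem_projSet_iff {k : Type*} [Field k] {n : ℕ} {W : Submodule k (Fin (n + 1) → k)}
    {v : Fin (n + 1) → k} (hv : v ≠ 0) : Projectivization.mk k v hv ∈ projSet W ↔ v ∈ W := by
  obtain ⟨a, ha⟩ := Projectivization.exists_smul_eq_mk_rep k v hv
  show _ ∈ W ↔ _
  rw [← ha, Submodule.smul_mem_iff']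

section MomentCurve

variable {k : Type*} [Field k] {n : ℕ}

variable (n) in
def momentVec (t : k) : Fin (n + 1) → k := fun i => t ^ (i : ℕ)

theorem momentVec_ne_zero (t : k) : momentVec n t ≠ 0 :=
  fun h => by simpa [momentVec] using congrFun h 0

variable (n) in
noncomputable def momentPoint (t : k) : ProjSpace k n :=
  Projectivization.mk k (momentVec n t) (momentVec_ne_zero t)

theorem momentPoint_injective (hn : n ≠ 0) : Function.Injective (momentPoint (k := k) n) := by
  intro s t h
  obtain ⟨a, ha⟩ := (Projectivization.mk_eq_mk_iff' k _ _ _ _).mp h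
  have h0 := congrFun ha 0
  have h1 := congrFun ha ⟨1, by omega⟩
  simp only [momentVec, Pi.smul_apply, smul_eq_mul, Fin.val_zero, pow_zero, mul_one,
    pow_one] at h0 h1
  rw [← h1, h0, one_mul]

theorem eval_momentVec (F : MvPolynomial (Fin (n + 1)) k) (t : k) :
    eval (momentVec n t) F =
      (MvPolynomial.aeval (fun i : Fin (n + 1) => Polynomial.X ^ (i : ℕ)) F).eval t := by
  rw [← Polynomial.coe_aeval_eq_eval, ← AlgHom.comp_apply, comp_aeval, ← coe_aeval_eq_eval]
  simp only [map_pow, Polynomial.aeval_X]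
  rfl

theorem linearIndependent_momentVec {m : ℕ} {v : Fin m → k} (hv : Function.Injective v)
    (hm : m ≤ n + 1) : LinearIndependent k (momentVec n ∘ v) := by
  have hrows : LinearIndependent k (Matrix.vandermonde v).row :=
    Matrix.linearIndependent_rows_iff_isUnit.mpr <| by
      rwa [Matrix.isUnit_iff_isUnit_det, isUnit_iff_ne_zero, Matrix.det_vandermonde_ne_zero_iff]
  -- truncated to their first `m` coordinates, the vectors are the rows of `vandermonde v`
  exact LinearIndependent.of_comp (LinearMap.funLeft k k (Fin.castLE hm)) hrows

theorem card_le_finrank_of_momentVec_mem {W : Submodule k (Fin (n + 1) → k)}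
    (hW : Module.finrank k W ≤ n) {S : Finset k} (hS : ∀ t ∈ S, momentVec n t ∈ W) :
    S.card ≤ Module.finrank k W := by
  by_contra! hlt
  obtain ⟨S', hS'S, hS'card⟩ := Finset.exists_subset_card_eq hlt
  set v : Fin (Module.finrank k W + 1) → k := fun i => (S'.equivFinOfCardEq hS'card).symm i
  have hv : Function.Injective v :=
    Subtype.val_injective.comp (S'.equivFinOfCardEq hS'card).symm.injective
  have hspan : Submodule.span k (Set.range (momentVec n ∘ v)) ≤ W :=
    Submodule.span_le.mpr <| Set.range_subset_iff.mpr fun i => hS _ (hS'S (Subtype.prop _))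
  have hcard := finrank_span_eq_card (linearIndependent_momentVec (n := n) hv (by omega))
  have hle := Submodule.finrank_mono hspan
  rw [hcard, Fintype.card_fin] at hle
  omega

theorem isCB_image_momentPoint (hn : n ≠ 0) {r : ℕ} {S : Finset k} (hS : n * r + 2 ≤ S.card) :
    IsCB r (momentPoint n '' (S : Set k)) := by
  classical
  rintro F hF - ⟨t, ht, rfl⟩ hvan
  rw [momentPoint, hF.eval_rep_mk_eq_zero_iff, eval_momentVec]
  set p : Polynomial k := MvPolynomial.aeval (fun i : Fin (n + 1) => Polynomial.X ^ (i : ℕ)) F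
  suffices p = 0 by rw [this, Polynomial.eval_zero]
  refine Polynomial.eq_zero_of_natDegree_lt_card_of_eval_eq_zero' p (S.erase t) (fun s hs => ?_) ?_
  · obtain ⟨hst, hsS⟩ := Finset.mem_erase.mp hs
    rw [← eval_momentVec, ← hF.eval_rep_mk_eq_zero_iff (momentVec_ne_zero s)]
    exact hvan _ ⟨s, hsS, rfl⟩ ((momentPoint_injective hn).ne hst)
  · have hp : p.natDegree ≤ n * r :=
      hF.natDegree_aeval_le fun i => (Polynomial.natDegree_X_pow_le _).trans (by omega)
    rw [Finset.card_erase_of_mem ht]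
    omega

end MomentCurve

namespace PlaneConfig

variable {k : Type*} [Field k] {n : ℕ} (C : PlaneConfig k n)

theorem finrank_le_dim_add_one (i : Fin C.length) : Module.finrank k (C.P i) ≤ C.dim + 1 := by
  have hle := Finset.single_le_sum (f := fun j => Module.finrank k (C.P j) - 1)
    (fun _ _ => Nat.zero_le _) (Finset.mem_univ i)
  simp only [dim] at hle ⊢
  omega

theorem sum_finrank_le_two_mul_dim : ∑ i, Module.finrank k (C.P i) ≤ 2 * C.dim := by
  rw [dim, Finset.mul_sum]
  exact Finset.sum_le_sum fun i _ => by have := C.posdim i; omega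

theorem not_image_momentPoint_subset_points (hdim : C.dim < n) {S : Finset k}
    (hS : 2 * C.dim < S.card) : ¬ momentPoint n '' (S : Set k) ⊆ C.points := by
  classical
  intro hsub
  have hcover : S ⊆ Finset.univ.biUnion fun i => S.filter fun t => momentVec n t ∈ C.P i := by
    intro t ht
    obtain ⟨i, hi⟩ := Set.mem_iUnion.mp (hsub ⟨t, ht, rfl⟩)
    exact Finset.mem_biUnion.mpr
      ⟨i, Finset.mem_univ i, Finset.mem_filter.mpr ⟨ht, (mk_mem_projSet_iff _).mp hi⟩⟩
  have hfiber (i : Fin C.length) :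
      (S.filter fun t => momentVec n t ∈ C.P i).card ≤ Module.finrank k (C.P i) :=
    card_le_finrank_of_momentVec_mem (by have := C.finrank_le_dim_add_one i; omega)
      fun t ht => (Finset.mem_filter.mp ht).2
  have hle : S.card ≤ 2 * C.dim :=
    calc S.card ≤ _ := Finset.card_le_card hcover
      _ ≤ _ := Finset.card_biUnion_le
      _ ≤ ∑ i, Module.finrank k (C.P i) := Finset.sum_le_sum fun i _ => hfiber i
      _ ≤ 2 * C.dim := C.sum_finrank_le_two_mul_dim
  omega

end PlaneConfig

theorem sharpness_general {k : Type*} [Field k] [Infinite k] (d r : ℕ) (hr : 2 ≤ r) :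
    ∃ Γ : Set (ProjSpace k (d + 1)), Γ.Finite ∧ Γ.ncard = (d + 1) * r + 2 ∧
      IsCB r Γ ∧ ¬ ∃ C : PlaneConfig k (d + 1), C.dim ≤ d ∧ Γ ⊆ C.points := by
  obtain ⟨S, hS⟩ := Infinite.exists_subset_card_eq k ((d + 1) * r + 2)
  refine ⟨momentPoint (d + 1) '' S, S.finite_toSet.image _, ?_,
    isCB_image_momentPoint d.succ_ne_zero hS.ge, ?_⟩
  · rw [Set.ncard_image_of_injective _ (momentPoint_injective d.succ_ne_zero),
      Set.ncard_coe_finset, hS]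
  · rintro ⟨C, hdim, hsub⟩
    have hcard : 2 * d < (d + 1) * r + 2 := by nlinarith
    exact C.not_image_momentPoint_subset_points (by omega) (by omega) hsub

/-- Sharpness of the bound: for every `d ≥ 1` and `r ≥ 2` there is a finite set of
exactly `(d+1)r + 2` points in `ℙ^(d+1)` satisfying `CB(r)` which does not lie on any
plane configuration of dimension at most `d`. -/
theorem sharpness {k : Type*} [Field k] [Infinite k] (d r : ℕ) (hd : 1 ≤ d) (hr : 2 ≤ r) :
    ∃ Γ : Set (ProjSpace k (d + 1)), Γ.Finite ∧ Γ.ncard = (d + 1) * r + 2 ∧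
      IsCB r Γ ∧ ¬ ∃ C : PlaneConfig k (d + 1), C.dim ≤ d ∧ Γ ⊆ C.points :=
  sharpness_general d r hr
end
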